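/- Let ρ : (0,1] → ℝ be a nonnegative measurable function such that r ↦ r³ρ(r) is integrable on (0,1) and satisfies the second-moment normalization ∫₀¹ r³ρ(r) dr = 2/π. Then for every δ > 0 and every k ∈ ℤ² \ {0}, the 2D nonlocal Fourier symbol satisfies the upper bound λ_δ(k) ≤ |k|². -/

import Mathlib

open Real MeasureTheory

/-- Euclidean norm of a nonzero integer vector `k ∈ ℤ²`. -/
noncomputable def knorm2 (k : ℤ × ℤ) : ℝ :=
  Real.sqrt ((k.1 : ℝ) ^ 2 + (k.2 : ℝ) ^ 2)

/-- The 2D Fourier symbol of the nonlocal diffusion operator: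
`λ_δ(k) = (4/δ²) ∫₀^{π/2} ∫₀¹ r ρ(r) (1 − cos(r δ |k| cos θ)) dr dθ`. -/
noncomputable def lambdaDelta2 (ρ : ℝ → ℝ) (δ κ : ℝ) : ℝ :=
  (4 / δ ^ 2) * ∫ θ in (0:ℝ)..(π / 2), ∫ r in (0:ℝ)..1,
    r * ρ r * (1 - Real.cos (r * δ * κ * Real.cos θ))

/-!
Since `1 - cos x ≤ x² / 2`, the inner integral is at most `(δ κ cos θ)² / 2` times the second
moment `∫₀¹ r³ ρ(r) dr`, and `∫₀^{π/2} cos² θ dθ = π / 4`; hence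
`λ_δ(κ) ≤ (π / 2) κ² ∫₀¹ r³ ρ(r) dr`, which is `κ²` under the normalization.
-/

theorem integral_cos_sq_zero_pi_div_two : ∫ θ in (0:ℝ)..(π / 2), cos θ ^ 2 = π / 4 := by
  rw [integral_cos_sq, cos_pi_div_two, sin_pi_div_two, cos_zero, sin_zero]
  ring

section Kernel

variable {ρ : ℝ → ℝ}

theorem mul_one_sub_cos_nonneg {r : ℝ} (hr : 0 ≤ r) (hρ : 0 ≤ ρ r) (c : ℝ) :
    0 ≤ r * ρ r * (1 - cos (r * c)) :=
  mul_nonneg (mul_nonneg hr hρ) (sub_nonneg.2 (cos_le_one _))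

theorem integral_mul_one_sub_cos_nonneg (hnonneg : ∀ r ∈ Set.Ioc (0:ℝ) 1, 0 ≤ ρ r) (c : ℝ) :
    0 ≤ ∫ r in (0:ℝ)..1, r * ρ r * (1 - cos (r * c)) := by
  rw [intervalIntegral.integral_of_le zero_le_one]
  exact setIntegral_nonneg_ae measurableSet_Ioc
    (Filter.Eventually.of_forall fun r hr => mul_one_sub_cos_nonneg hr.1.le (hnonneg r hr) c)

theorem integral_mul_one_sub_cos_le (hnonneg : ∀ r ∈ Set.Ioc (0:ℝ) 1, 0 ≤ ρ r)
    (hint : IntervalIntegrable (fun r => r ^ 3 * ρ r) volume 0 1) (c : ℝ) :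
    ∫ r in (0:ℝ)..1, r * ρ r * (1 - cos (r * c))
      ≤ c ^ 2 / 2 * ∫ r in (0:ℝ)..1, r ^ 3 * ρ r := by
  rw [← intervalIntegral.integral_const_mul, intervalIntegral.integral_of_le zero_le_one,
    intervalIntegral.integral_of_le zero_le_one]
  refine integral_mono_of_nonneg ?_ (hint.const_mul _).1 ?_
  · filter_upwards [ae_restrict_mem measurableSet_Ioc] with r hr
    exact mul_one_sub_cos_nonneg hr.1.le (hnonneg r hr) c
  · filter_upwards [ae_restrict_mem measurableSet_Ioc] with r hr
    calc r * ρ r * (1 - cos (r * c)) ≤ r * ρ r * ((r * c) ^ 2 / 2) := by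
          gcongr
          · exact mul_nonneg hr.1.le (hnonneg r hr)
          · linarith [one_sub_sq_div_two_le_cos (x := r * c)]
      _ = c ^ 2 / 2 * (r ^ 3 * ρ r) := by ring

theorem lambdaDelta2_le_mul_moment (hnonneg : ∀ r ∈ Set.Ioc (0:ℝ) 1, 0 ≤ ρ r)
    (hint : IntervalIntegrable (fun r => r ^ 3 * ρ r) volume 0 1) {δ : ℝ} (hδ : δ ≠ 0)
    (κ : ℝ) :
    lambdaDelta2 ρ δ κ ≤ π / 2 * κ ^ 2 * ∫ r in (0:ℝ)..1, r ^ 3 * ρ r := by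
  set M := ∫ r in (0:ℝ)..1, r ^ 3 * ρ r
  have hπ : 0 ≤ π / 2 := by positivity
  have houter : ∫ θ in (0:ℝ)..(π / 2), ∫ r in (0:ℝ)..1,
      r * ρ r * (1 - cos (r * δ * κ * cos θ))
        ≤ ∫ θ in (0:ℝ)..(π / 2), δ ^ 2 * κ ^ 2 * M / 2 * cos θ ^ 2 := by
    simp_rw [mul_assoc _ δ κ, mul_assoc _ (δ * κ)]
    rw [intervalIntegral.integral_of_le hπ, intervalIntegral.integral_of_le hπ]
    refine integral_mono_of_nonneg
      (Filter.Eventually.of_forall fun θ => integral_mul_one_sub_cos_nonneg hnonneg _)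
      (by fun_prop : Continuous fun θ => δ ^ 2 * κ ^ 2 * M / 2 * cos θ ^ 2).integrableOn_Ioc
      (Filter.Eventually.of_forall fun θ => ?_)
    refine (integral_mul_one_sub_cos_le hnonneg hint (δ * κ * cos θ)).trans_eq ?_
    ring
  rw [intervalIntegral.integral_const_mul, integral_cos_sq_zero_pi_div_two] at houter
  calc lambdaDelta2 ρ δ κ ≤ 4 / δ ^ 2 * (δ ^ 2 * κ ^ 2 * M / 2 * (π / 4)) := by
        unfold lambdaDelta2
        gcongr
    _ = π / 2 * κ ^ 2 * M := by field_simp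

end Kernel

theorem lambdaDelta2_upper_bound (ρ : ℝ → ℝ)
    (hnonneg : ∀ r ∈ Set.Ioc (0:ℝ) 1, 0 ≤ ρ r)
    (hint : IntervalIntegrable (fun r => r ^ 3 * ρ r) volume 0 1)
    (hmoment : (∫ r in (0:ℝ)..1, r ^ 3 * ρ r) = 2 / π)
    (δ : ℝ) (hδ : 0 < δ) (k : ℤ × ℤ) :
    lambdaDelta2 ρ δ (knorm2 k) ≤ (knorm2 k) ^ 2 := by
  calc lambdaDelta2 ρ δ (knorm2 k) ≤ π / 2 * knorm2 k ^ 2 * (2 / π) :=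
        hmoment ▸ lambdaDelta2_le_mul_moment hnonneg hint hδ.ne' (knorm2 k)
    _ = knorm2 k ^ 2 := by field_simp
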